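/- arXiv:1205.5649 — 3 statements merged into one kernel-verified Lean document; each statement's English description precedes it below -/
import Mathlib

section
/- For the finite birth-death chain with battery capacity B>1 and p≠q, the stationary probability of being in a state ≥1 is r_B = (p/q)(1-ρ^B)/(1-(p/q)ρ^B), where ρ = p(1-q)/(q(1-p)). -/
open scoped BigOperators

set_option maxHeartbeats 2000000

/-- Transition kernel of the finite-battery (capacity `B`) energy queue: from state 0 go up
w.p. `p`; from interior states go up w.p. `p(1-q)` and down w.p. `q(1-p)`; from state `B`
go down w.p. `q(1-p)`. -/
noncomputable def finiteEnergyKernel (p q : ℝ) (B : ℕ) (i j : ℕ) : ℝ :=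
  if i = 0 then
    (if j = 1 then p else if j = 0 then 1 - p else 0)
  else if i = B then
    (if j = B - 1 then q * (1 - p) else if j = B then 1 - q * (1 - p) else 0)
  else
    (if j = i + 1 then p * (1 - q)
     else if j = i - 1 then q * (1 - p)
     else if j = i then 1 - p * (1 - q) - q * (1 - p)
     else 0)

/-- For the finite birth-death energy queue with capacity `B > 1` and `p ≠ q`, any
stationary distribution `π` puts mass `(p/q)(1-ρ^B)/(1-(p/q)ρ^B)` on states `≥ 1`,
where `ρ = p(1-q)/(q(1-p))`. -/
theorem stationary_nonempty_prob_finite_battery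
    (p q : ℝ) (B : ℕ) (hB : 1 < B)
    (hp : 0 < p) (hp1 : p < 1) (hq : 0 < q) (hq1 : q < 1) (hpq : p ≠ q)
    (π : ℕ → ℝ) (hπ0 : ∀ i, 0 ≤ π i) (hπsupp : ∀ i, B < i → π i = 0)
    (hπsum : ∑ i ∈ Finset.range (B + 1), π i = 1)
    (hstat : ∀ j, π j = ∑ i ∈ Finset.range (B + 1), π i * finiteEnergyKernel p q B i j) :
    1 - π 0 =
      (p / q) * (1 - (p * (1 - q) / (q * (1 - p))) ^ B) /
        (1 - (p / q) * (p * (1 - q) / (q * (1 - p))) ^ B) := by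
  have h1p : (0:ℝ) < 1 - p := by linarith
  have h1q : (0:ℝ) < 1 - q := by linarith
  have hb : 0 < q * (1 - p) := mul_pos hq h1p
  have hu : 0 < p * (1 - q) := mul_pos hp h1q
  have hrpos : 0 < p * (1 - q) / (q * (1 - p)) := div_pos hu hb
  have hbru : q * (1 - p) * (p * (1 - q) / (q * (1 - p))) = p * (1 - q) := by
    field_simp
  -- cut (flow) balance equations
  have key : ∀ j, j < B →
      π j * (if j = 0 then p else p * (1 - q)) = π (j + 1) * (q * (1 - p)) := by
    intro j
    induction j with
    | zero =>
      intro _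
      have hs := hstat 0
      have hsub : ({0, 1} : Finset ℕ) ⊆ Finset.range (B + 1) := by
        intro x hx
        simp only [Finset.mem_insert, Finset.mem_singleton] at hx
        simp only [Finset.mem_range]; omega
      have hzero : ∀ x ∈ Finset.range (B + 1), x ∉ ({0, 1} : Finset ℕ) →
          π x * finiteEnergyKernel p q B x 0 = 0 := by
        intro x _ hxs
        simp only [Finset.mem_insert, Finset.mem_singleton, not_or] at hxs
        have : finiteEnergyKernel p q B x 0 = 0 := by
          unfold finiteEnergyKernel
          split_ifs <;> first | rfl | omega | contradiction
        rw [this, mul_zero]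
      rw [← Finset.sum_subset hsub hzero] at hs
      rw [Finset.sum_insert (by simp), Finset.sum_singleton] at hs
      have k00 : finiteEnergyKernel p q B 0 0 = 1 - p := by
        unfold finiteEnergyKernel
        split_ifs <;> first | rfl | omega | contradiction
      have k10 : finiteEnergyKernel p q B 1 0 = q * (1 - p) := by
        unfold finiteEnergyKernel
        split_ifs <;> first | rfl | omega | contradiction
      rw [k00, k10] at hs
      rw [if_pos rfl]
      linarith
    | succ k ih =>
      intro hkB
      have hflow := ih (by omega)
      have hs := hstat (k + 1)
      have hsub : ({k, k + 1, k + 2} : Finset ℕ) ⊆ Finset.range (B + 1) := by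
        intro x hx
        simp only [Finset.mem_insert, Finset.mem_singleton] at hx
        simp only [Finset.mem_range]; omega
      have hzero : ∀ x ∈ Finset.range (B + 1), x ∉ ({k, k + 1, k + 2} : Finset ℕ) →
          π x * finiteEnergyKernel p q B x (k + 1) = 0 := by
        intro x _ hxs
        simp only [Finset.mem_insert, Finset.mem_singleton, not_or] at hxs
        have : finiteEnergyKernel p q B x (k + 1) = 0 := by
          unfold finiteEnergyKernel
          split_ifs <;> first | rfl | omega | contradiction
        rw [this, mul_zero]
      rw [← Finset.sum_subset hsub hzero] at hs
      rw [Finset.sum_insert (by simp), Finset.sum_insert (by simp),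
        Finset.sum_singleton] at hs
      have kup : finiteEnergyKernel p q B k (k + 1) = (if k = 0 then p else p * (1 - q)) := by
        unfold finiteEnergyKernel
        split_ifs <;> first | rfl | omega | contradiction
      have kmid : finiteEnergyKernel p q B (k + 1) (k + 1)
          = 1 - p * (1 - q) - q * (1 - p) := by
        unfold finiteEnergyKernel
        split_ifs <;> first | rfl | omega | contradiction
      have kdown : finiteEnergyKernel p q B (k + 2) (k + 1) = q * (1 - p) := by
        unfold finiteEnergyKernel
        split_ifs <;> first | rfl | omega | contradiction
      rw [kup, kmid, kdown] at hs
      rw [if_neg (Nat.succ_ne_zero k)]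
      linarith
  -- geometric form of the stationary distribution
  have hπk : ∀ k, k < B → π (k + 1) = π 1 * (p * (1 - q) / (q * (1 - p))) ^ k := by
    intro k
    induction k with
    | zero => intro _; simp
    | succ m ih =>
      intro hmB
      have h1 := ih (by omega)
      have h2 := key (m + 1) hmB
      rw [if_neg (Nat.succ_ne_zero m)] at h2
      have hrec : π (m + 1 + 1) = π (m + 1) * (p * (1 - q) / (q * (1 - p))) := by
        field_simp
        linarith
      rw [hrec, h1]
      ring
  have hGsum : ∑ i ∈ Finset.range B, π (i + 1)
      = π 1 * ∑ i ∈ Finset.range B, (p * (1 - q) / (q * (1 - p))) ^ i := by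
    rw [Finset.mul_sum]
    exact Finset.sum_congr rfl fun i hi => hπk i (Finset.mem_range.mp hi)
  have h1sum : π 0 + π 1 * ∑ i ∈ Finset.range B, (p * (1 - q) / (q * (1 - p))) ^ i = 1 := by
    rw [Finset.sum_range_succ'] at hπsum
    rw [← hGsum]
    linarith [hπsum]
  have h3 : (∑ i ∈ Finset.range B, (p * (1 - q) / (q * (1 - p))) ^ i)
      * ((p * (1 - q) / (q * (1 - p))) - 1)
      = (p * (1 - q) / (q * (1 - p))) ^ B - 1 := geom_sum_mul _ B
  have h2 := key 0 (by omega)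
  rw [if_pos rfl] at h2
  have hrel : π 0 * (q - p * (p * (1 - q) / (q * (1 - p))) ^ B) = q - p := by
    linear_combination (q - p) * h1sum
      - (π 1 * (∑ i ∈ Finset.range B, (p * (1 - q) / (q * (1 - p))) ^ i)) * hbru
      + (π 0 * p) * h3
      - ((∑ i ∈ Finset.range B, (p * (1 - q) / (q * (1 - p))) ^ i)
          * ((p * (1 - q) / (q * (1 - p))) - 1)) * h2
  have hD : 1 - p / q * (p * (1 - q) / (q * (1 - p))) ^ B ≠ 0 := by
    rcases lt_or_gt_of_ne hpq with h | h
    · have hr1 : p * (1 - q) / (q * (1 - p)) < 1 := (div_lt_one hb).mpr (by nlinarith)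
      have hXlt : (p * (1 - q) / (q * (1 - p))) ^ B < 1 := pow_lt_one₀ hrpos.le hr1 (by omega)
      have hXpos : 0 < (p * (1 - q) / (q * (1 - p))) ^ B := pow_pos hrpos B
      have hpq1 : p / q < 1 := (div_lt_one hq).mpr h
      have hdq : 0 < p / q := div_pos hp hq
      have hlt : p / q * (p * (1 - q) / (q * (1 - p))) ^ B < 1 := by
        have := mul_lt_mul'' hpq1 hXlt hdq.le hXpos.le
        simpa using this
      exact ne_of_gt (by linarith)
    · have hr1 : 1 < p * (1 - q) / (q * (1 - p)) := (one_lt_div hb).mpr (by nlinarith)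
      have hXgt : 1 < (p * (1 - q) / (q * (1 - p))) ^ B := one_lt_pow₀ hr1 (by omega)
      have hpq1 : 1 < p / q := (one_lt_div hq).mpr h
      have hgt : 1 < p / q * (p * (1 - q) / (q * (1 - p))) ^ B := by
        have := mul_lt_mul'' hpq1 hXgt (by norm_num) (by norm_num)
        simpa using this
      exact ne_of_lt (by linarith)
  have hRb : (p * (1 - q) / (q * (1 - p))) ^ B * (q * (1 - p)) ^ B = (p * (1 - q)) ^ B := by
    rw [div_pow, div_mul_cancel₀]
    exact pow_ne_zero _ hb.ne'
  have hrel2 : π 0 * (q * (q * (1 - p)) ^ B - p * (p * (1 - q)) ^ B)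
      = (q - p) * (q * (1 - p)) ^ B := by
    linear_combination ((q * (1 - p)) ^ B) * hrel + (π 0 * p) * hRb
  rw [eq_div_iff hD]
  linear_combination (-1/q) * hrel - (1 - π 0) * (mul_inv_cancel₀ hq.ne')
end

section
/- In the ALOHA throughput game with infinite battery capacity, if p < λ_max/λ then the price of anarchy equals 1; if p > λ_max/λ it equals λ_max/(e·p·λ·exp(-pλ/λ_max)), and this quantity is ≥ 1. -/
lemma h_le_inv_e (t : ℝ) : t * Real.exp (-t) ≤ Real.exp (-1) := by
  have h1 : t ≤ Real.exp (t - 1) := by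
    have := Real.add_one_le_exp (t - 1); linarith
  calc t * Real.exp (-t) ≤ Real.exp (t - 1) * Real.exp (-t) := by
        exact mul_le_mul_of_nonneg_right h1 (Real.exp_pos _).le
    _ = Real.exp (-1) := by rw [← Real.exp_add]; ring_nf

lemma h_mono : MonotoneOn (fun t : ℝ => t * Real.exp (-t)) (Set.Icc 0 1) := by
  have hd : ∀ t : ℝ, HasDerivAt (fun t : ℝ => t * Real.exp (-t))
      ((1 - t) * Real.exp (-t)) t := by
    intro t
    have h1 : HasDerivAt (fun t : ℝ => Real.exp (-t)) (-Real.exp (-t)) t := by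
      simpa [Function.comp_def] using (Real.hasDerivAt_exp (-t)).comp t (hasDerivAt_neg t)
    have := (hasDerivAt_id t).mul h1
    exact this.congr_deriv (by simp only [id]; ring)
  apply monotoneOn_of_deriv_nonneg (convex_Icc 0 1)
  · exact (continuous_id.mul (Real.continuous_exp.comp continuous_neg)).continuousOn
  · intro t ht
    exact (hd t).differentiableAt.differentiableWithinAt
  · intro t ht
    rw [interior_Icc] at ht
    rw [(hd t).deriv]
    have := Real.exp_pos (-t)
    nlinarith [ht.1, ht.2]

/-- Price of anarchy of the ALOHA throughput game with infinite battery (Lemma 2 of the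
paper): the PoA is the ratio of the globally optimal transmission capacity
`max_{q∈[0,1]} λ·min(p,q)·exp(-λ·min(p,q)/λ_max)` to the capacity
`λ·p·exp(-λp/λ_max)` at the (worst) symmetric Nash equilibrium. It equals `1` if
`p < λ_max/λ`, and `λ_max/(e·p·λ·exp(-pλ/λ_max))` (which is `≥ 1`) if `p > λ_max/λ`. -/
theorem aloha_game_PoA_infinite_battery
    (lam lamMax p : ℝ) (hlam : 0 < lam) (hlamMax : 0 < lamMax)
    (hp : 0 < p) (hp1 : p ≤ 1) :
    (p < lamMax / lam →
      sSup ((fun q : ℝ => lam * min p q * Real.exp (-(lam * min p q) / lamMax)) ''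
            Set.Icc (0 : ℝ) 1) /
          (lam * p * Real.exp (-(lam * p) / lamMax)) = 1) ∧
    (p > lamMax / lam →
      sSup ((fun q : ℝ => lam * min p q * Real.exp (-(lam * min p q) / lamMax)) ''
            Set.Icc (0 : ℝ) 1) /
          (lam * p * Real.exp (-(lam * p) / lamMax))
        = lamMax / (Real.exp 1 * p * lam * Real.exp (-(p * lam) / lamMax)) ∧
      1 ≤ lamMax / (Real.exp 1 * p * lam * Real.exp (-(p * lam) / lamMax))) := by
  have hMne : lamMax ≠ 0 := ne_of_gt hlamMax
  have g_eq : ∀ x : ℝ, lam * x * Real.exp (-(lam * x) / lamMax)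
      = lamMax * ((lam * x / lamMax) * Real.exp (-(lam * x / lamMax))) := by
    intro x
    rw [neg_div]
    field_simp
  constructor
  · -- case p < lamMax / lam
    intro hcase
    have ht2 : lam * p / lamMax ≤ 1 := by
      rw [div_le_one hlamMax]
      rw [lt_div_iff₀ hlam] at hcase
      linarith [hcase]
    have hgreat : IsGreatest
        ((fun q : ℝ => lam * min p q * Real.exp (-(lam * min p q) / lamMax)) ''
          Set.Icc (0 : ℝ) 1) (lam * p * Real.exp (-(lam * p) / lamMax)) := by
      constructor
      · exact ⟨p, ⟨hp.le, hp1⟩, by simp [min_self]⟩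
      · rintro y ⟨q, hq, rfl⟩
        simp only
        set x := min p q with hx
        have hx0 : 0 ≤ x := le_min hp.le hq.1
        have hxp : x ≤ p := min_le_left _ _
        rw [g_eq x, g_eq p]
        apply mul_le_mul_of_nonneg_left _ hlamMax.le
        have hle : lam * x / lamMax ≤ lam * p / lamMax := by gcongr
        have ht1mem : lam * x / lamMax ∈ Set.Icc (0:ℝ) 1 :=
          ⟨by positivity, le_trans hle ht2⟩
        have ht2mem : lam * p / lamMax ∈ Set.Icc (0:ℝ) 1 := ⟨by positivity, ht2⟩
        exact h_mono ht1mem ht2mem hle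
    rw [hgreat.csSup_eq]
    have hpos : 0 < lam * p * Real.exp (-(lam * p) / lamMax) := by positivity
    exact div_self (ne_of_gt hpos)
  · -- case p > lamMax / lam
    intro hcase
    set q0 : ℝ := lamMax / lam with hq0
    have hq0pos : 0 < q0 := div_pos hlamMax hlam
    have hq0p : q0 < p := hcase
    have hlamq0 : lam * q0 = lamMax := by
      rw [hq0]; field_simp
    have hgq0 : lam * q0 * Real.exp (-(lam * q0) / lamMax) = lamMax * Real.exp (-1) := by
      rw [hlamq0, neg_div, div_self hMne]
    have hgreat : IsGreatest
        ((fun q : ℝ => lam * min p q * Real.exp (-(lam * min p q) / lamMax)) ''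
          Set.Icc (0 : ℝ) 1) (lamMax * Real.exp (-1)) := by
      constructor
      · refine ⟨q0, ⟨hq0pos.le, le_trans hq0p.le hp1⟩, ?_⟩
        simp only [min_eq_right hq0p.le]
        exact hgq0
      · rintro y ⟨q, hq, rfl⟩
        simp only
        set x := min p q with hx
        rw [g_eq x]
        exact mul_le_mul_of_nonneg_left (h_le_inv_e _) hlamMax.le
    rw [hgreat.csSup_eq]
    have hE : Real.exp (-(lam * p) / lamMax) = Real.exp (-(p * lam) / lamMax) := by
      ring_nf
    have hexp1 : Real.exp 1 * Real.exp (-1) = 1 := by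
      rw [← Real.exp_add]; norm_num
    constructor
    · rw [hE]
      have hEpos := Real.exp_pos (-(p * lam) / lamMax)
      have h1pos := Real.exp_pos (1 : ℝ)
      rw [div_eq_div_iff (by positivity) (by positivity)]
      linear_combination (lamMax * p * lam * Real.exp (-(p * lam) / lamMax)) * hexp1
    · have hD : 0 < Real.exp 1 * p * lam * Real.exp (-(p * lam) / lamMax) := by positivity
      rw [one_le_div hD]
      have key := h_le_inv_e (p * lam / lamMax)
      have hEeq : -(p * lam) / lamMax = -(p * lam / lamMax) := by ring
      rw [hEeq]
      have step : lamMax * Real.exp 1 * (p * lam / lamMax * Real.exp (-(p * lam / lamMax)))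
          ≤ lamMax * Real.exp 1 * Real.exp (-1) :=
        mul_le_mul_of_nonneg_left key (by positivity)
      calc Real.exp 1 * p * lam * Real.exp (-(p * lam / lamMax))
          = lamMax * Real.exp 1 * (p * lam / lamMax * Real.exp (-(p * lam / lamMax))) := by
            field_simp
        _ ≤ lamMax * Real.exp 1 * Real.exp (-1) := step
        _ = lamMax := by rw [mul_assoc, hexp1, mul_one]
end

section
/- (FKG-type bound) Let the success events A_t = {SIR(t) > θ}, t = 0,1,...,L, each be decreasing events with respect to the set of active interferers, with identical marginal probability 1−P_b. Then P(A_0 ∩ A_1 ∩ ... ∩ A_L) ≥ (1−P_b)^{L+1}, and consequently the CSMA outage probability P_out = P_b + (1−P_b)·P(fail | no backoff), with P(fail|no backoff) = 1 − P(A_1∩...∩A_L | A_0), satisfies P_out ≤ 1 − (1−P_b)^{L+1}. -/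
open MeasureTheory ProbabilityTheory
open scoped BigOperators ENNReal

/-- An event `A ⊆ {0,1}^S` (with configurations `S → Bool` recording which interferers
are active) is decreasing if its indicator is non-increasing for the coordinatewise
order. -/
def DecreasingEvent {S : Type*} (A : Set (S → Bool)) : Prop :=
  ∀ ω ω' : S → Bool, (∀ s, ω s ≤ ω' s) → ω' ∈ A → ω ∈ A

section Aux
variable {S : Type*} [Fintype S] (μs : S → Measure Bool) [∀ s, IsProbabilityMeasure (μs s)]

lemma pi_meas_singleton (ω : S → Bool) :
    Measure.pi μs {ω} = ∏ s, μs s {ω s} := by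
  rw [← Set.univ_pi_singleton ω, Measure.pi_pi]

lemma pi_meas_eq_sum [DecidableEq S] (C : Set (S → Bool)) [DecidablePred (· ∈ C)] :
    Measure.pi μs C = ∑ ω ∈ Finset.univ.filter (· ∈ C), Measure.pi μs {ω} := by
  have hC : C = ⋃ ω ∈ Finset.univ.filter (· ∈ C), ({ω} : Set (S → Bool)) := by
    ext ω; simp
  conv_lhs => rw [hC]
  rw [measure_biUnion_finset]
  · intro x hx y hy hxy
    simp [Set.disjoint_singleton, hxy]
  · intro ω _; exact measurableSet_singleton ω

lemma pi_meas_toReal_eq [DecidableEq S] (C : Set (S → Bool)) [DecidablePred (· ∈ C)] :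
    (Measure.pi μs C).toReal
      = ∑ ω ∈ Finset.univ.filter (· ∈ C), ∏ s, (μs s {ω s}).toReal := by
  rw [pi_meas_eq_sum μs C, ENNReal.toReal_sum]
  · refine Finset.sum_congr rfl fun ω _ => ?_
    rw [pi_meas_singleton, ENNReal.toReal_prod]
  · intro ω _
    rw [pi_meas_singleton]
    exact ENNReal.prod_ne_top fun s _ => measure_ne_top _ _

/-- Harris/FKG inequality for two decreasing events on `{0,1}^S` with a product measure. -/
lemma harris_pi (A B : Set (S → Bool))
    (dA : DecreasingEvent A) (dB : DecreasingEvent B) :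
    Measure.pi μs A * Measure.pi μs B ≤ Measure.pi μs (A ∩ B) := by
  classical
  set w : (S → Bool) → ℝ := fun ω => ∏ s, (μs s {ω s}).toReal with hw
  have hw0 : ∀ ω, 0 ≤ w ω := fun ω =>
    Finset.prod_nonneg fun s _ => ENNReal.toReal_nonneg
  have key : ∀ C : Set (S → Bool), (Measure.pi μs C).toReal
      = ∑ ω, w ω * (if ω ∈ C then (1:ℝ) else 0) := by
    intro C
    rw [pi_meas_toReal_eq μs C, Finset.sum_filter]
    exact Finset.sum_congr rfl fun ω _ => by split <;> simp [hw]
  have hμlattice : ∀ x y : S → Bool, w x * w y = w (x ⊔ y) * w (x ⊓ y) := by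
    intro x y
    simp only [hw, ← Finset.prod_mul_distrib]
    refine Finset.prod_congr rfl fun s _ => ?_
    show (μs s {x s}).toReal * (μs s {y s}).toReal
        = (μs s {(x ⊔ y) s}).toReal * (μs s {(x ⊓ y) s}).toReal
    cases hx : x s <;> cases hy : y s <;>
      simp [Pi.sup_apply, Pi.inf_apply, hx, hy, mul_comm]
  set α := (S → Bool)ᵒᵈ
  have main := fkg (α := α) (β := ℝ)
      (μ := fun a => w (OrderDual.ofDual a))
      (f := fun a => if OrderDual.ofDual a ∈ A then (1:ℝ) else 0)
      (g := fun a => if OrderDual.ofDual a ∈ B then (1:ℝ) else 0)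
      (fun a => hw0 _) (fun a => by positivity) (fun a => by positivity)
      (fun a b hab => by
        dsimp only
        split
        · have h2 : OrderDual.ofDual b ∈ A := dA _ _ (fun s => hab s) ‹_›
          simp [h2]
        · split <;> norm_num)
      (fun a b hab => by
        dsimp only
        split
        · have h2 : OrderDual.ofDual b ∈ B := dB _ _ (fun s => hab s) ‹_›
          simp [h2]
        · split <;> norm_num)
      (fun a b => le_of_eq (hμlattice (OrderDual.ofDual a) (OrderDual.ofDual b)))
  beta_reduce at main
  have sum_dual : ∀ k : (S → Bool) → ℝ,
      ∑ a : α, k (OrderDual.ofDual a) = ∑ ω, k ω := fun k =>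
    Equiv.sum_comp (OrderDual.ofDual) k
  have eA : ∑ a : α, w (OrderDual.ofDual a) *
      (if OrderDual.ofDual a ∈ A then (1:ℝ) else 0) = (Measure.pi μs A).toReal :=
    (sum_dual _).trans (key A).symm
  have eB : ∑ a : α, w (OrderDual.ofDual a) *
      (if OrderDual.ofDual a ∈ B then (1:ℝ) else 0) = (Measure.pi μs B).toReal :=
    (sum_dual _).trans (key B).symm
  have etot : ∑ a : α, w (OrderDual.ofDual a) = (1:ℝ) := by
    rw [sum_dual]
    have := key Set.univ
    simp only [Set.mem_univ, if_true, mul_one] at this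
    rw [← this, measure_univ, ENNReal.toReal_one]
  have eAB : ∑ a : α, w (OrderDual.ofDual a) *
      ((if OrderDual.ofDual a ∈ A then (1:ℝ) else 0) *
        (if OrderDual.ofDual a ∈ B then (1:ℝ) else 0))
      = (Measure.pi μs (A ∩ B)).toReal := by
    rw [sum_dual (fun ω => w ω * ((if ω ∈ A then (1:ℝ) else 0) *
        (if ω ∈ B then (1:ℝ) else 0))), key (A ∩ B)]
    refine Finset.sum_congr rfl fun ω _ => ?_
    by_cases h1 : ω ∈ A <;> by_cases h2 : ω ∈ B <;>
      simp [h1, h2, Set.mem_inter_iff]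
  rw [eA, eB, etot, eAB, one_mul] at main
  refine (ENNReal.toReal_le_toReal
      (ENNReal.mul_ne_top (measure_ne_top _ _) (measure_ne_top _ _))
      (measure_ne_top _ _)).mp ?_
  rw [ENNReal.toReal_mul]
  exact main

lemma harris_pi_iInter {n : ℕ} (A : Fin n → Set (S → Bool))
    (hdec : ∀ t, DecreasingEvent (A t)) :
    (∏ t, Measure.pi μs (A t)) ≤ Measure.pi μs (⋂ t, A t) := by
  induction n with
  | zero => simp
  | succ n ih =>
      have hdec' : ∀ t : Fin n, DecreasingEvent (A t.succ) := fun t => hdec _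
      have hIdec : DecreasingEvent (⋂ t : Fin n, A t.succ) := by
        intro ω ω' h hmem
        simp only [Set.mem_iInter] at hmem ⊢
        exact fun t => hdec' t _ _ h (hmem t)
      have h1 : (⋂ t, A t) = A 0 ∩ ⋂ t : Fin n, A t.succ := by
        ext ω
        simp only [Set.mem_iInter, Set.mem_inter_iff]
        constructor
        · exact fun h => ⟨h 0, fun t => h t.succ⟩
        · rintro ⟨h0, h⟩ t
          rcases Fin.eq_zero_or_eq_succ t with rfl | ⟨u, rfl⟩
          · exact h0
          · exact h u
      rw [h1, Fin.prod_univ_succ]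
      calc Measure.pi μs (A 0) * ∏ t : Fin n, Measure.pi μs (A t.succ)
          ≤ Measure.pi μs (A 0) * Measure.pi μs (⋂ t : Fin n, A t.succ) :=
            mul_le_mul_right (ih _ hdec') _
        _ ≤ Measure.pi μs (A 0 ∩ ⋂ t : Fin n, A t.succ) :=
            harris_pi μs _ _ (hdec 0) hIdec

end Aux

/-- FKG-type bound on the CSMA outage probability: if the success events
`A_t = {SIR(t) > θ}`, `t = 0,…,L`, are decreasing events in the configuration of active
interferers (product measure), each with marginal probability `1 - P_b`, then
`P(A_0 ∩ ⋯ ∩ A_L) ≥ (1-P_b)^{L+1}`, and the outage probability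
`P_out = P_b + (1-P_b)·(1 - P(A_1 ∩ ⋯ ∩ A_L | A_0))` satisfies
`P_out ≤ 1 - (1-P_b)^{L+1}`. -/
theorem csma_outage_fkg_bound
    (S : Type*) [Fintype S] (μs : S → Measure Bool)
    [∀ s, IsProbabilityMeasure (μs s)]
    (L : ℕ) (A : Fin (L + 1) → Set (S → Bool))
    (hmeas : ∀ t, MeasurableSet (A t)) (hdec : ∀ t, DecreasingEvent (A t))
    (Pb : ℝ) (hPb0 : 0 ≤ Pb) (hPb1 : Pb < 1)
    (hmarg : ∀ t, Measure.pi μs (A t) = ENNReal.ofReal (1 - Pb)) :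
    ENNReal.ofReal ((1 - Pb) ^ (L + 1)) ≤ Measure.pi μs (⋂ t, A t) ∧
    Pb + (1 - Pb) *
        (1 - ((Measure.pi μs)[|A 0] (⋂ t : {t : Fin (L + 1) // t ≠ 0}, A t.1)).toReal) ≤
      1 - (1 - Pb) ^ (L + 1) := by
  have h1Pb : (0:ℝ) ≤ 1 - Pb := by linarith
  have hbound : ENNReal.ofReal ((1 - Pb) ^ (L + 1)) ≤ Measure.pi μs (⋂ t, A t) := by
    calc ENNReal.ofReal ((1 - Pb) ^ (L + 1))
        = (ENNReal.ofReal (1 - Pb)) ^ (L + 1) := ENNReal.ofReal_pow h1Pb _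
      _ = ∏ t : Fin (L + 1), Measure.pi μs (A t) := by
          rw [Finset.prod_congr rfl fun t _ => hmarg t]
          simp
      _ ≤ Measure.pi μs (⋂ t, A t) := harris_pi_iInter μs A hdec
  refine ⟨hbound, ?_⟩
  -- rewrite the conditional probability
  have hcap : A 0 ∩ (⋂ t : {t : Fin (L + 1) // t ≠ 0}, A t.1) = ⋂ t, A t := by
    ext ω
    simp only [Set.mem_inter_iff, Set.mem_iInter, Subtype.forall]
    constructor
    · rintro ⟨h0, h⟩ t
      by_cases ht : t = 0
      · subst ht; exact h0
      · exact h t ht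
    · exact fun h => ⟨h 0, fun t _ => h t⟩
  have hA0 : Measure.pi μs (A 0) = ENNReal.ofReal (1 - Pb) := hmarg 0
  have hcond : (Measure.pi μs)[|A 0] (⋂ t : {t : Fin (L + 1) // t ≠ 0}, A t.1)
      = (ENNReal.ofReal (1 - Pb))⁻¹ * Measure.pi μs (⋂ t, A t) := by
    rw [cond_apply (hmeas 0), hA0, hcap]
  have hne0 : ENNReal.ofReal (1 - Pb) ≠ 0 := by
    simp [ENNReal.ofReal_eq_zero]; linarith
  have hfin : Measure.pi μs (⋂ t, A t) ≠ ⊤ := measure_ne_top _ _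
  have htR : ((Measure.pi μs)[|A 0]
      (⋂ t : {t : Fin (L + 1) // t ≠ 0}, A t.1)).toReal
      = (Measure.pi μs (⋂ t, A t)).toReal / (1 - Pb) := by
    rw [hcond, ENNReal.toReal_mul, ENNReal.toReal_inv, ENNReal.toReal_ofReal h1Pb]
    ring
  rw [htR]
  have hItR : (1 - Pb) ^ (L + 1) ≤ (Measure.pi μs (⋂ t, A t)).toReal := by
    have := ENNReal.toReal_mono hfin hbound
    rwa [ENNReal.toReal_ofReal (by positivity)] at this
  have hpos : (0:ℝ) < 1 - Pb := by linarith
  have : (1 - Pb) * (1 - (Measure.pi μs (⋂ t, A t)).toReal / (1 - Pb))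
      = (1 - Pb) - (Measure.pi μs (⋂ t, A t)).toReal := by
    field_simp
  rw [this]
  linarith
end
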